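/- arXiv:2010.12843 — 2 statements merged into one kernel-verified Lean document; each statement's English description precedes it below -/
import Mathlib

section
/- There exists a constant C > 0, depending only on M, such that for every smooth function f on a neighbourhood of the closure of M one has |f|_{L^8_x L^4_z}⁴ ≤ C |f|_{L⁶}³ ‖f‖. -/
open MeasureTheory Set

noncomputable section

/-- The domain `M = (0,L) × (0,L) × (-h,0) ⊆ ℝ³`. -/
def Mset (L h : ℝ) : Set (ℝ × ℝ × ℝ) := Ioo 0 L ×ˢ Ioo 0 L ×ˢ Ioo (-h) 0

/-- `f` is smooth on an open neighbourhood of the closure of `M`. -/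
def SmoothNearM (L h : ℝ) (f : ℝ → ℝ → ℝ → ℝ) : Prop :=
  ∃ U : Set (ℝ × ℝ × ℝ), IsOpen U ∧ closure (Mset L h) ⊆ U ∧
    ContDiffOn ℝ (⊤ : ℕ∞) (fun p : ℝ × ℝ × ℝ => f p.1 p.2.1 p.2.2) U

/-- Partial derivative in `x`. -/
def pdx (f : ℝ → ℝ → ℝ → ℝ) : ℝ → ℝ → ℝ → ℝ := fun x y z => deriv (fun t => f t y z) x
/-- Partial derivative in `y`. -/
def pdy (f : ℝ → ℝ → ℝ → ℝ) : ℝ → ℝ → ℝ → ℝ := fun x y z => deriv (fun t => f x t z) y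
/-- Partial derivative in `z`. -/
def pdz (f : ℝ → ℝ → ℝ → ℝ) : ℝ → ℝ → ℝ → ℝ := fun x y z => deriv (fun t => f x y t) z

/-- Iterated integral over `M`. -/
def intM (L h : ℝ) (g : ℝ → ℝ → ℝ → ℝ) : ℝ :=
  ∫ x in Ioo (0:ℝ) L, ∫ y in Ioo (0:ℝ) L, ∫ z in Ioo (-h) (0:ℝ), g x y z

/-- Square of the `L²(M)` norm. -/
def sqL2 (L h : ℝ) (f : ℝ → ℝ → ℝ → ℝ) : ℝ := intM L h fun x y z => (f x y z) ^ 2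

/-- The `L²(M)` norm `|f|`. -/
def L2norm (L h : ℝ) (f : ℝ → ℝ → ℝ → ℝ) : ℝ := Real.sqrt (sqL2 L h f)

/-- The `L^p(M)` norm. -/
def LpNorm (L h p : ℝ) (f : ℝ → ℝ → ℝ → ℝ) : ℝ :=
  (intM L h fun x y z => |f x y z| ^ p) ^ (1 / p)

/-- Square of the `L²(M)` norm of the full (three-dimensional) gradient. -/
def gradSq (L h : ℝ) (f : ℝ → ℝ → ℝ → ℝ) : ℝ :=
  sqL2 L h (pdx f) + sqL2 L h (pdy f) + sqL2 L h (pdz f)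

/-- The `L²(M)` norm of the full (three-dimensional) gradient `|∇₃ f|_{L²}`. -/
def gradL2 (L h : ℝ) (f : ℝ → ℝ → ℝ → ℝ) : ℝ := Real.sqrt (gradSq L h f)

/-- The `H¹(M)` norm `‖f‖ = (|f|² + |∇₃ f|²)^{1/2}`. -/
def H1norm (L h : ℝ) (f : ℝ → ℝ → ℝ → ℝ) : ℝ :=
  Real.sqrt (sqL2 L h f + gradSq L h f)

/-- The anisotropic norm `|f|_{L^q_x L^p_z}`. -/
def anisoNorm (L h q p : ℝ) (f : ℝ → ℝ → ℝ → ℝ) : ℝ :=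
  (∫ x in Ioo (0:ℝ) L, ∫ y in Ioo (0:ℝ) L,
    (∫ z in Ioo (-h) (0:ℝ), |f x y z| ^ p) ^ (q / p)) ^ (1 / q)

/-!
Write `F(x,y) = ∫ f(x,y,z)⁴ dz`. Along each horizontal line, the fundamental theorem of calculus
bounds `f⁴` by its mean plus the total variation, `L⁻¹ ∫ f⁴ + 4 ∫ |f³ ∂_y f|`; integrating in `z`
gives `F(x,y) ≤ B(x)` and, for the transposed function, `F(x,y) ≤ A(y)`. Hence
`|f|_{L⁸_x L⁴_z}⁸ = ∫∫ F² ≤ ∫ A · ∫ B`, and Cauchy–Schwarz bounds each factor by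
`(L⁻¹ + 4) |f|_{L⁶}³ ‖f‖`.
-/

open Function

section Fubini

variable {α β γ E : Type*} [MeasurableSpace α] [MeasurableSpace β] [MeasurableSpace γ]
  [NormedAddCommGroup E] [NormedSpace ℝ E]
  {μ : Measure α} {ν : Measure β} {ρ : Measure γ} [SFinite μ] [SFinite ν] [SFinite ρ]
  {g : α → β → γ → E}

theorem ae_integral_prod_eq_integral_integral (hg : Integrable (↿g) (μ.prod (ν.prod ρ))) :
    ∀ᵐ x ∂μ, ∫ q, ↿g (x, q) ∂(ν.prod ρ) = ∫ y, ∫ z, g x y z ∂ρ ∂ν :=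
  hg.prod_right_ae.mono fun _ hx => integral_prod _ hx

theorem integral_prod_prod_eq_integral_integral_integral
    (hg : Integrable (↿g) (μ.prod (ν.prod ρ))) :
    ∫ p, ↿g p ∂(μ.prod (ν.prod ρ)) = ∫ x, ∫ y, ∫ z, g x y z ∂ρ ∂ν ∂μ :=
  (integral_prod _ hg).trans (integral_congr_ae (ae_integral_prod_eq_integral_integral hg))

theorem MeasureTheory.Integrable.integral_integral (hg : Integrable (↿g) (μ.prod (ν.prod ρ))) :
    Integrable (fun x => ∫ y, ∫ z, g x y z ∂ρ ∂ν) μ :=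
  hg.integral_prod_left.congr (ae_integral_prod_eq_integral_integral hg)

theorem integral_integral_integral_swap (hg : Integrable (↿g) (μ.prod (ν.prod ρ))) :
    ∫ x, ∫ y, ∫ z, g x y z ∂ρ ∂ν ∂μ = ∫ y, ∫ x, ∫ z, g x y z ∂ρ ∂μ ∂ν := by
  have hg' : Integrable (fun q : (α × β) × γ => g q.1.1 q.1.2 q.2) ((μ.prod ν).prod ρ) :=
    (measurePreserving_prodAssoc μ ν ρ).integrable_comp_emb
      MeasurableEquiv.prodAssoc.measurableEmbedding |>.mpr hg
  exact integral_integral_swap hg'.integral_prod_left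

end Fubini

section

variable {α β : Type*} [MeasurableSpace α] [MeasurableSpace β] {μ : Measure α} {ν : Measure β}

theorem integral_integral_sq_le_mul {F : α → β → ℝ} {A : α → ℝ} {B : β → ℝ}
    (hA : Integrable A μ) (hB : Integrable B ν)
    (hF : ∀ᵐ x ∂μ, ∀ᵐ y ∂ν, 0 ≤ F x y ∧ F x y ≤ A x ∧ F x y ≤ B y) :
    ∫ x, ∫ y, F x y ^ 2 ∂ν ∂μ ≤ (∫ x, A x ∂μ) * ∫ y, B y ∂ν := by
  have inner : ∀ᵐ x ∂μ, ∫ y, F x y ^ 2 ∂ν ≤ A x * ∫ y, B y ∂ν := by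
    filter_upwards [hF] with x hx
    rw [← integral_const_mul]
    refine integral_mono_of_nonneg (ae_of_all _ fun y => sq_nonneg _) (hB.const_mul _) ?_
    filter_upwards [hx] with y ⟨h0, hAx, hBy⟩
    rw [sq]
    exact mul_le_mul hAx hBy h0 (h0.trans hAx)
  rw [← integral_mul_const]
  exact integral_mono_of_nonneg (ae_of_all _ fun x => integral_nonneg fun y => sq_nonneg _)
    (hA.mul_const _) inner

theorem integral_abs_mul_le_sqrt_mul_sqrt {u v : α → ℝ} (hu : MemLp u 2 μ) (hv : MemLp v 2 μ) :
    ∫ a, |u a * v a| ∂μ ≤ √(∫ a, u a ^ 2 ∂μ) * √(∫ a, v a ^ 2 ∂μ) := by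
  have key := integral_mul_norm_le_Lp_mul_Lq (p := 2) (q := 2) Real.HolderConjugate.two_two
    (by simpa using hu) (by simpa using hv)
  simpa [Real.sqrt_eq_rpow, abs_mul, Real.norm_eq_abs, sq_abs] using key

end

theorem le_inv_mul_integral_add_integral_abs_deriv {g g' : ℝ → ℝ} {a b x : ℝ}
    (hderiv : ∀ t ∈ Ioo a b, HasDerivAt g (g' t) t) (hg : IntegrableOn g (Ioo a b))
    (hg' : IntegrableOn g' (Ioo a b)) (hx : x ∈ Ioo a b) :
    g x ≤ (b - a)⁻¹ * (∫ t in Ioo a b, g t) + ∫ t in Ioo a b, |g' t| := by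
  have hab : a < b := hx.1.trans hx.2
  have osc : ∀ t ∈ Ioo a b, g x - ∫ s in Ioo a b, |g' s| ≤ g t := by
    intro t ht
    have hsub : uIcc t x ⊆ Ioo a b := ordConnected_Ioo.uIcc_subset ht hx
    have ftc : ∫ s in t..x, g' s = g x - g t :=
      intervalIntegral.integral_eq_sub_of_hasDerivAt (fun s hs => hderiv s (hsub hs))
        ((hg'.mono_set hsub).intervalIntegrable)
    have hvar : ∫ s in t..x, g' s ≤ ∫ s in Ioo a b, |g' s| :=
      calc ∫ s in t..x, g' s ≤ ∫ s in uIoc t x, |g' s| := (le_abs_self _).trans <| by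
            simpa only [Real.norm_eq_abs] using
              intervalIntegral.norm_integral_le_integral_norm_uIoc (f := g')
        _ ≤ ∫ s in Ioo a b, |g' s| :=
            setIntegral_mono_set hg'.abs (ae_of_all _ fun _ => abs_nonneg _)
              (uIoc_subset_uIcc.trans hsub).eventuallyLE
    linarith
  have avg := setIntegral_ge_of_const_le measurableSet_Ioo (by simp) osc hg
  rw [Real.volume_real_Ioo_of_le hab.le, smul_eq_mul] at avg
  rw [inv_mul_eq_div, ← sub_le_iff_le_add, le_div_iff₀' (sub_pos.2 hab)]
  exact avg

section Box

variable {L h : ℝ}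

theorem volume_restrict_Mset :
    volume.restrict (Mset L h) = (volume.restrict (Ioo 0 L)).prod
      ((volume.restrict (Ioo 0 L)).prod (volume.restrict (Ioo (-h) 0))) := by
  rw [Measure.prod_restrict, Measure.prod_restrict, ← Measure.volume_eq_prod,
    ← Measure.volume_eq_prod, Mset]

theorem integrableOn_Mset_of_continuousOn {g : ℝ × ℝ × ℝ → ℝ}
    (hg : ContinuousOn g (closure (Mset L h))) : IntegrableOn g (Mset L h) :=
  (hg.integrableOn_compact (Metric.isBounded_Ioo _ _ |>.prod <|
    (Metric.isBounded_Ioo _ _).prod (Metric.isBounded_Ioo _ _)).isCompact_closure).mono_set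
    subset_closure

variable {g : ℝ → ℝ → ℝ → ℝ}

theorem intM_eq_setIntegral (hg : IntegrableOn (↿g) (Mset L h)) :
    intM L h g = ∫ p in Mset L h, ↿g p := by
  rw [IntegrableOn, volume_restrict_Mset] at hg
  rw [volume_restrict_Mset, integral_prod_prod_eq_integral_integral_integral hg, intM]

theorem intM_transpose (hg : IntegrableOn (↿g) (Mset L h)) :
    intM L h (fun x y z => g y x z) = intM L h g := by
  rw [IntegrableOn, volume_restrict_Mset] at hg
  exact (integral_integral_integral_swap hg).symm

theorem intM_nonneg (hg : ∀ x y z, 0 ≤ g x y z) : 0 ≤ intM L h g :=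
  integral_nonneg fun x => integral_nonneg fun y => integral_nonneg fun z => hg x y z

theorem intM_abs_mul_le {u v : ℝ → ℝ → ℝ → ℝ} (hu : ContinuousOn (↿u) (closure (Mset L h)))
    (hv : ContinuousOn (↿v) (closure (Mset L h))) :
    intM L h (fun x y z => |u x y z * v x y z|) ≤
      √(intM L h fun x y z => u x y z ^ 2) * √(intM L h fun x y z => v x y z ^ 2) := by
  have memLp {w : ℝ → ℝ → ℝ → ℝ} (hw : ContinuousOn (↿w) (closure (Mset L h))) :
      MemLp (↿w) 2 (volume.restrict (Mset L h)) :=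
    (memLp_two_iff_integrable_sq ((hw.mono subset_closure).aestronglyMeasurable
      (measurableSet_Ioo.prod (measurableSet_Ioo.prod measurableSet_Ioo)))).2
      (integrableOn_Mset_of_continuousOn (hw.pow 2))
  rw [intM_eq_setIntegral (integrableOn_Mset_of_continuousOn (hu.mul hv).abs),
    intM_eq_setIntegral (integrableOn_Mset_of_continuousOn (hu.pow 2)),
    intM_eq_setIntegral (integrableOn_Mset_of_continuousOn (hv.pow 2))]
  exact integral_abs_mul_le_sqrt_mul_sqrt (memLp hu) (memLp hv)

end Box

section Smooth

variable {L h : ℝ} {f : ℝ → ℝ → ℝ → ℝ}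

theorem hasDerivAt_fderiv_apply_y {x y z : ℝ} (hd : DifferentiableAt ℝ (↿f) (x, y, z)) :
    HasDerivAt (fun t => f x t z) (fderiv ℝ (↿f) (x, y, z) (0, 1, 0)) y :=
  HasFDerivAt.comp_hasDerivAt (l := ↿f) y hd.hasFDerivAt
    ((hasDerivAt_const y x).prodMk ((hasDerivAt_id y).prodMk (hasDerivAt_const y z)))

namespace SmoothNearM

theorem continuousOn (hf : SmoothNearM L h f) : ContinuousOn (↿f) (closure (Mset L h)) := by
  obtain ⟨U, -, hKU, hfU⟩ := hf
  exact hfU.continuousOn.mono hKU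

theorem hasDerivAt_pdy (hf : SmoothNearM L h f) {x y z : ℝ} (hp : (x, y, z) ∈ closure (Mset L h)) :
    HasDerivAt (fun t => f x t z) (pdy f x y z) y := by
  obtain ⟨U, hU, hKU, hfU⟩ := hf
  have hd := hasDerivAt_fderiv_apply_y
    ((hfU.contDiffAt (hU.mem_nhds (hKU hp))).differentiableAt (by simp))
  rwa [pdy, hd.deriv]

theorem continuousOn_pdy (hf : SmoothNearM L h f) :
    ContinuousOn (↿(pdy f)) (closure (Mset L h)) := by
  obtain ⟨U, hU, hKU, hfU⟩ := hf
  refine ContinuousOn.mono ?_ hKU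
  refine ((hfU.continuousOn_fderiv_of_isOpen hU (by simp)).clm_apply
    (continuousOn_const (c := ((0, 1, 0) : ℝ × ℝ × ℝ)))).congr fun p hp => ?_
  exact (hasDerivAt_fderiv_apply_y
    ((hfU.contDiffAt (hU.mem_nhds hp)).differentiableAt (by simp))).deriv

theorem transpose (hf : SmoothNearM L h f) : SmoothNearM L h fun x y z => f y x z := by
  obtain ⟨U, hU, hKU, hfU⟩ := hf
  let σ : ℝ × ℝ × ℝ → ℝ × ℝ × ℝ := fun p => (p.2.1, p.1, p.2.2)
  have hσ : ContDiff ℝ (⊤ : ℕ∞) σ := by fun_prop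
  have hK : closure (Mset L h) ⊆ σ ⁻¹' closure (Mset L h) :=
    closure_minimal (fun p hp => subset_closure ⟨hp.2.1, hp.1, hp.2.2⟩)
      (isClosed_closure.preimage hσ.continuous)
  exact ⟨σ ⁻¹' U, hU.preimage hσ.continuous, hK.trans (preimage_mono hKU),
    hfU.comp hσ.contDiffOn (mapsTo_preimage σ U)⟩

end SmoothNearM

theorem continuousOn_slice_y {g : ℝ → ℝ → ℝ → ℝ} (hg : ContinuousOn (↿g) (closure (Mset L h)))
    {x y z : ℝ} (hp : (x, y, z) ∈ Mset L h) : ContinuousOn (fun t => g x t z) (Icc 0 L) := by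
  refine hg.comp (by fun_prop : Continuous fun t : ℝ => (x, t, z)).continuousOn fun t ht => ?_
  rw [Mset, closure_prod_eq, closure_prod_eq, closure_Ioo (hp.2.1.1.trans hp.2.1.2).ne]
  exact ⟨Ioo_subset_Icc_self hp.1, ht, subset_closure hp.2.2⟩

end Smooth

section Majorant

variable {L h : ℝ} {f : ℝ → ℝ → ℝ → ℝ}

def gagliardoDensityY (L : ℝ) (f : ℝ → ℝ → ℝ → ℝ) : ℝ → ℝ → ℝ → ℝ :=
  fun x y z => L⁻¹ * f x y z ^ 4 + 4 * |f x y z ^ 3 * pdy f x y z|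

def yMajorant (L h : ℝ) (f : ℝ → ℝ → ℝ → ℝ) (x : ℝ) : ℝ :=
  ∫ y in Ioo 0 L, ∫ z in Ioo (-h) 0, gagliardoDensityY L f x y z

theorem SmoothNearM.continuousOn_gagliardoDensityY (hf : SmoothNearM L h f) :
    ContinuousOn (↿(gagliardoDensityY L f)) (closure (Mset L h)) :=
  (continuousOn_const.mul (hf.continuousOn.pow 4)).add
    (continuousOn_const.mul ((hf.continuousOn.pow 3).mul hf.continuousOn_pdy).abs)

theorem SmoothNearM.integrable_gagliardoDensityY (hf : SmoothNearM L h f) :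
    Integrable (↿(gagliardoDensityY L f)) ((volume.restrict (Ioo 0 L)).prod
      ((volume.restrict (Ioo 0 L)).prod (volume.restrict (Ioo (-h) 0)))) := by
  rw [← volume_restrict_Mset]
  exact integrableOn_Mset_of_continuousOn hf.continuousOn_gagliardoDensityY

theorem SmoothNearM.pow_four_le_integral_gagliardoDensityY (hf : SmoothNearM L h f) {x y z : ℝ}
    (hp : (x, y, z) ∈ Mset L h) :
    f x y z ^ 4 ≤ ∫ t in Ioo 0 L, gagliardoDensityY L f x t z := by
  have hf' := continuousOn_slice_y hf.continuousOn hp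
  have hfy := continuousOn_slice_y hf.continuousOn_pdy hp
  have hg : IntegrableOn (fun t => f x t z ^ 4) (Ioo 0 L) :=
    (hf'.pow 4).integrableOn_Icc.mono_set Ioo_subset_Icc_self
  have hg' : IntegrableOn (fun t => f x t z ^ 3 * pdy f x t z) (Ioo 0 L) :=
    ((hf'.pow 3).mul hfy).integrableOn_Icc.mono_set Ioo_subset_Icc_self
  have key := le_inv_mul_integral_add_integral_abs_deriv (g := fun t => f x t z ^ 4)
    (fun t ht => ((hf.hasDerivAt_pdy (y := t) (subset_closure ⟨hp.1, ht, hp.2.2⟩)).pow 4)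
      |>.congr_deriv (by ring))
    hg (hg'.const_mul 4) hp.2.1
  simp only [gagliardoDensityY]
  rw [integral_add (hg.const_mul _) (hg'.abs.const_mul _), integral_const_mul, integral_const_mul]
  simpa only [sub_zero, abs_mul (4 : ℝ), abs_of_pos (four_pos : (0 : ℝ) < 4),
    integral_const_mul] using key

theorem SmoothNearM.integrable_yMajorant (hf : SmoothNearM L h f) :
    Integrable (yMajorant L h f) (volume.restrict (Ioo 0 L)) :=
  hf.integrable_gagliardoDensityY.integral_integral

theorem SmoothNearM.ae_integral_pow_four_le_yMajorant (hf : SmoothNearM L h f) :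
    ∀ᵐ x ∂volume.restrict (Ioo 0 L), ∀ y ∈ Ioo 0 L,
      ∫ z in Ioo (-h) 0, f x y z ^ 4 ≤ yMajorant L h f x := by
  filter_upwards [ae_restrict_mem measurableSet_Ioo, hf.integrable_gagliardoDensityY.prod_right_ae]
    with x hx hxΨ y hy
  have hswap : Integrable (uncurry fun z t => gagliardoDensityY L f x t z)
      ((volume.restrict (Ioo (-h) 0)).prod (volume.restrict (Ioo 0 L))) := hxΨ.swap
  calc ∫ z in Ioo (-h) 0, f x y z ^ 4
      ≤ ∫ z in Ioo (-h) 0, ∫ t in Ioo 0 L, gagliardoDensityY L f x t z :=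
        integral_mono_of_nonneg (ae_of_all _ fun z => by positivity) hswap.integral_prod_left
          ((ae_restrict_iff' measurableSet_Ioo).2 (ae_of_all _ fun z hz =>
            hf.pow_four_le_integral_gagliardoDensityY ⟨hx, hy, hz⟩))
    _ = yMajorant L h f x := integral_integral_swap hswap

end Majorant

section Norms

variable {L h : ℝ} {f : ℝ → ℝ → ℝ → ℝ}

theorem LpNorm_nonneg {p : ℝ} : 0 ≤ LpNorm L h p f :=
  Real.rpow_nonneg (intM_nonneg fun _ _ _ => Real.rpow_nonneg (abs_nonneg _) _) _

theorem LpNorm_six_pow_three : LpNorm L h 6 f ^ 3 = √(intM L h fun x y z => f x y z ^ 6) := by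
  have habs : (fun x y z => |f x y z| ^ (6 : ℝ)) = fun x y z => f x y z ^ 6 := by
    funext x y z
    rw [show (6 : ℝ) = (6 : ℕ) by norm_num, Real.rpow_natCast, Even.pow_abs ⟨3, rfl⟩]
  rw [LpNorm, habs, ← Real.rpow_natCast, ← Real.rpow_mul (intM_nonneg fun _ _ _ => by positivity),
    Real.sqrt_eq_rpow]
  norm_num

theorem anisoNorm_eight_four_pow_eight :
    anisoNorm L h 8 4 f ^ 8 =
      ∫ x in Ioo 0 L, ∫ y in Ioo 0 L, (∫ z in Ioo (-h) 0, f x y z ^ 4) ^ 2 := by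
  have habs (x y : ℝ) : (∫ z in Ioo (-h) 0, |f x y z| ^ (4 : ℝ)) ^ ((8 : ℝ) / 4) =
      (∫ z in Ioo (-h) 0, f x y z ^ 4) ^ 2 := by
    rw [show (8 : ℝ) / 4 = (2 : ℕ) by norm_num, Real.rpow_natCast]
    congr 2 with z
    rw [show (4 : ℝ) = (4 : ℕ) by norm_num, Real.rpow_natCast, Even.pow_abs ⟨2, rfl⟩]
  simp only [anisoNorm, habs, one_div]
  exact Real.rpow_inv_natCast_pow
    (integral_nonneg fun _ => integral_nonneg fun _ => sq_nonneg _) (by norm_num)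

theorem sqL2_nonneg (L h : ℝ) (f : ℝ → ℝ → ℝ → ℝ) : 0 ≤ sqL2 L h f :=
  intM_nonneg fun _ _ _ => sq_nonneg _

theorem L2norm_le_H1norm : L2norm L h f ≤ H1norm L h f :=
  Real.sqrt_le_sqrt <| by
    unfold gradSq
    linarith [sqL2_nonneg L h (pdx f), sqL2_nonneg L h (pdy f), sqL2_nonneg L h (pdz f)]

theorem L2norm_pdx_le_H1norm : L2norm L h (pdx f) ≤ H1norm L h f :=
  Real.sqrt_le_sqrt <| by
    unfold gradSq
    linarith [sqL2_nonneg L h f, sqL2_nonneg L h (pdy f), sqL2_nonneg L h (pdz f)]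

theorem L2norm_pdy_le_H1norm : L2norm L h (pdy f) ≤ H1norm L h f :=
  Real.sqrt_le_sqrt <| by
    unfold gradSq
    linarith [sqL2_nonneg L h f, sqL2_nonneg L h (pdx f), sqL2_nonneg L h (pdz f)]

end Norms

section Estimate

variable {L h : ℝ} {f : ℝ → ℝ → ℝ → ℝ}

theorem SmoothNearM.intM_gagliardoDensityY_le (hL : 0 ≤ L) (hf : SmoothNearM L h f) {N : ℝ}
    (hf₂ : L2norm L h f ≤ N) (hfy₂ : L2norm L h (pdy f) ≤ N) :
    intM L h (gagliardoDensityY L f) ≤ (L⁻¹ + 4) * (LpNorm L h 6 f ^ 3 * N) := by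
  have hc := hf.continuousOn
  have hcy := hf.continuousOn_pdy
  have hi4 : IntegrableOn (↿fun x y z => |f x y z ^ 3 * f x y z|) (Mset L h) :=
    integrableOn_Mset_of_continuousOn ((hc.pow 3).mul hc).abs
  have hiy : IntegrableOn (↿fun x y z => |f x y z ^ 3 * pdy f x y z|) (Mset L h) :=
    integrableOn_Mset_of_continuousOn ((hc.pow 3).mul hcy).abs
  have hlin : intM L h (gagliardoDensityY L f) =
      L⁻¹ * intM L h (fun x y z => |f x y z ^ 3 * f x y z|) +
        4 * intM L h (fun x y z => |f x y z ^ 3 * pdy f x y z|) := by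
    rw [intM_eq_setIntegral (integrableOn_Mset_of_continuousOn hf.continuousOn_gagliardoDensityY),
      intM_eq_setIntegral hi4, intM_eq_setIntegral hiy, ← integral_const_mul, ← integral_const_mul,
      ← integral_add (hi4.const_mul _) (hiy.const_mul _)]
    congr 1 with p
    have habs (a : ℝ) : |a ^ 3 * a| = a ^ 4 := by
      rw [show a ^ 3 * a = (a ^ 2) ^ 2 by ring, abs_sq]; ring
    simp only [HasUncurry.uncurry, gagliardoDensityY, id, habs]
  have hsix : (intM L h fun x y z => (f x y z ^ 3) ^ 2) = intM L h fun x y z => f x y z ^ 6 := by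
    simp only [← pow_mul]
  have hc3 : ContinuousOn (↿fun x y z => f x y z ^ 3) (closure (Mset L h)) := hc.pow 3
  have hff := intM_abs_mul_le hc3 hc
  have hffy := intM_abs_mul_le hc3 hcy
  rw [hsix, ← LpNorm_six_pow_three] at hff hffy
  rw [hlin]
  calc L⁻¹ * intM L h (fun x y z => |f x y z ^ 3 * f x y z|) +
        4 * intM L h (fun x y z => |f x y z ^ 3 * pdy f x y z|)
      ≤ L⁻¹ * (LpNorm L h 6 f ^ 3 * N) + 4 * (LpNorm L h 6 f ^ 3 * N) := by
        have hLinv := inv_nonneg.2 hL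
        have hS := pow_nonneg (LpNorm_nonneg (L := L) (h := h) (p := 6) (f := f)) 3
        gcongr
        exacts [hff.trans (mul_le_mul_of_nonneg_left hf₂ hS),
          hffy.trans (mul_le_mul_of_nonneg_left hfy₂ hS)]
    _ = (L⁻¹ + 4) * (LpNorm L h 6 f ^ 3 * N) := by ring

theorem yMajorant_nonneg (hL : 0 ≤ L) (x : ℝ) : 0 ≤ yMajorant L h f x :=
  integral_nonneg fun _ => integral_nonneg fun _ => add_nonneg
    (mul_nonneg (inv_nonneg.2 hL) (Even.pow_nonneg ⟨2, rfl⟩ _)) (by positivity)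

theorem SmoothNearM.integral_yMajorant_le (hL : 0 ≤ L) (hf : SmoothNearM L h f) :
    ∫ x in Ioo 0 L, yMajorant L h f x ≤ (L⁻¹ + 4) * (LpNorm L h 6 f ^ 3 * H1norm L h f) :=
  hf.intM_gagliardoDensityY_le hL L2norm_le_H1norm L2norm_pdy_le_H1norm

theorem SmoothNearM.integral_yMajorant_transpose_le (hL : 0 ≤ L) (hf : SmoothNearM L h f) :
    ∫ y in Ioo 0 L, yMajorant L h (fun x y z => f y x z) y ≤
      (L⁻¹ + 4) * (LpNorm L h 6 f ^ 3 * H1norm L h f) := by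
  have hfT := hf.transpose
  have hLp : LpNorm L h 6 (fun x y z => f y x z) ^ 3 = LpNorm L h 6 f ^ 3 := by
    rw [LpNorm_six_pow_three, LpNorm_six_pow_three,
      intM_transpose (g := fun x y z => f x y z ^ 6)
        (integrableOn_Mset_of_continuousOn (by exact hf.continuousOn.pow 6))]
  have hL2 : L2norm L h (fun x y z => f y x z) = L2norm L h f := by
    rw [L2norm, L2norm, sqL2, sqL2, intM_transpose (g := fun x y z => f x y z ^ 2)
        (integrableOn_Mset_of_continuousOn (by exact hf.continuousOn.pow 2))]
  -- `pdy` of the transpose is the transpose of `pdx`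
  have hpdy : L2norm L h (pdy fun x y z => f y x z) = L2norm L h (pdx f) :=
    congrArg Real.sqrt (intM_transpose (g := fun x y z => pdy (fun x y z => f y x z) x y z ^ 2)
      (integrableOn_Mset_of_continuousOn (by exact hfT.continuousOn_pdy.pow 2))).symm
  rw [← hLp]
  exact hfT.intM_gagliardoDensityY_le hL (hL2 ▸ L2norm_le_H1norm) (hpdy ▸ L2norm_pdx_le_H1norm)

theorem SmoothNearM.anisoNorm_pow_eight_le (hf : SmoothNearM L h f) :
    anisoNorm L h 8 4 f ^ 8 ≤ (∫ x in Ioo 0 L, yMajorant L h f x) *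
      ∫ y in Ioo 0 L, yMajorant L h (fun x y z => f y x z) y := by
  rw [anisoNorm_eight_four_pow_eight]
  refine integral_integral_sq_le_mul hf.integrable_yMajorant hf.transpose.integrable_yMajorant ?_
  filter_upwards [hf.ae_integral_pow_four_le_yMajorant, ae_restrict_mem measurableSet_Ioo]
    with x hfx hx
  filter_upwards [hf.transpose.ae_integral_pow_four_le_yMajorant, ae_restrict_mem measurableSet_Ioo]
    with y hfy hy
  exact ⟨integral_nonneg fun z => by positivity, hfx y hy, hfy x hx⟩

end Estimate

theorem stmt6_general (L h : ℝ) (hL : 0 < L) :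
    ∃ C : ℝ, 0 < C ∧
      ∀ f : ℝ → ℝ → ℝ → ℝ, SmoothNearM L h f →
        anisoNorm L h 8 4 f ^ 4 ≤ C * LpNorm L h 6 f ^ 3 * H1norm L h f := by
  refine ⟨L⁻¹ + 4, by positivity, fun f hf => ?_⟩
  have hbound : 0 ≤ (L⁻¹ + 4) * (LpNorm L h 6 f ^ 3 * H1norm L h f) :=
    mul_nonneg (by positivity) (mul_nonneg (pow_nonneg LpNorm_nonneg 3) (Real.sqrt_nonneg _))
  rw [mul_assoc, ← pow_le_pow_iff_left₀ (by positivity) hbound two_ne_zero]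
  calc (anisoNorm L h 8 4 f ^ 4) ^ 2 = anisoNorm L h 8 4 f ^ 8 := by ring
    _ ≤ (∫ x in Ioo 0 L, yMajorant L h f x) *
          ∫ y in Ioo 0 L, yMajorant L h (fun x y z => f y x z) y := hf.anisoNorm_pow_eight_le
    _ ≤ ((L⁻¹ + 4) * (LpNorm L h 6 f ^ 3 * H1norm L h f)) *
          ((L⁻¹ + 4) * (LpNorm L h 6 f ^ 3 * H1norm L h f)) :=
        mul_le_mul (hf.integral_yMajorant_le hL.le) (hf.integral_yMajorant_transpose_le hL.le)
          (integral_nonneg fun _ => yMajorant_nonneg hL.le _) hbound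
    _ = _ := (sq _).symm

/-- estimate \eqref{eq:ct64}:
there is `C > 0`, depending only on `M`, with
`|f|_{L^8_x L^4_z}⁴ ≤ C |f|_{L⁶}³ ‖f‖` for all `f` smooth near the closure of `M`. -/
theorem stmt6 (L h : ℝ) (hL : 0 < L) (hh : 0 < h) :
    ∃ C : ℝ, 0 < C ∧
      ∀ f : ℝ → ℝ → ℝ → ℝ, SmoothNearM L h f →
        anisoNorm L h 8 4 f ^ 4 ≤ C * LpNorm L h 6 f ^ 3 * H1norm L h f :=
  stmt6_general L h hL
end
end

section
/- Let u, v : M → ℝ² be smooth on a neighbourhood of the closure of M, L-periodic in the horizontal variables x and y, with ∂_z u = ∂_z v = 0 on the top boundary z = 0 and on the bottom boundary z = -h, and assume ∫_{-h}^{0} div u(x,y,z) dz = 0 for all (x,y) ∈ M₀. Then ∫_M ∂_z(B₂(u,v)) · ∂_z v dM = ∫_M ( Σ_{j,k=1}^{2} ∂_z u_j ∂_j v_k ∂_z v_k − (div u) |∂_z v|² ) dM = − ∫_M Σ_{j,k=1}^{2} ( ∂_z ∂_j u_j v_k ∂_z v_k + ∂_z u_j v_k ∂_j ∂_z v_k −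 2 u_j ∂_j ∂_z v_k ∂_z v_k ) dM, where ∂_1 = ∂_x, ∂_2 = ∂_y and |∂_z v| is the pointwise Euclidean norm. -/
open MeasureTheory Set

noncomputable section

/-- Square of the `H¹(M)` norm of a scalar function. -/
def H1sq (L h : ℝ) (f : ℝ → ℝ → ℝ → ℝ) : ℝ := sqL2 L h f + gradSq L h f

/-- Square of the `H²(M)` norm of a scalar function
(`L²` norms of all partial derivatives up to order two). -/
def H2sq (L h : ℝ) (f : ℝ → ℝ → ℝ → ℝ) : ℝ :=
  H1sq L h f + gradSq L h (pdx f) + gradSq L h (pdy f) + gradSq L h (pdz f)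

/-- The `L²(M)` norm `|U|` of a pair `U = (v, T)` with `v = (v1, v2)`. -/
def L2triple (L h : ℝ) (v1 v2 T : ℝ → ℝ → ℝ → ℝ) : ℝ :=
  Real.sqrt (sqL2 L h v1 + sqL2 L h v2 + sqL2 L h T)

/-- The `H¹(M)` norm `‖U‖` of a pair `U = (v, T)` with `v = (v1, v2)`. -/
def H1triple (L h : ℝ) (v1 v2 T : ℝ → ℝ → ℝ → ℝ) : ℝ :=
  Real.sqrt (H1sq L h v1 + H1sq L h v2 + H1sq L h T)

/-- The `H²(M)` norm `‖U‖_{H²}` of a pair `U = (v, T)` with `v = (v1, v2)`. -/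
def H2triple (L h : ℝ) (v1 v2 T : ℝ → ℝ → ℝ → ℝ) : ℝ :=
  Real.sqrt (H2sq L h v1 + H2sq L h v2 + H2sq L h T)

/-- The vertical velocity `w(v)(x,y,z) = -∫_{-h}^z div v(x,y,z') dz'`. -/
def wvel (h : ℝ) (v1 v2 : ℝ → ℝ → ℝ → ℝ) : ℝ → ℝ → ℝ → ℝ :=
  fun x y z => -(∫ t in (-h)..z, (pdx v1 x y t + pdy v2 x y t))

/-- A component of `B₂(u, v) = (u·∇)v + w(u) ∂_z v`, applied to a scalar component `g`. -/
def B2comp (h : ℝ) (u1 u2 g : ℝ → ℝ → ℝ → ℝ) : ℝ → ℝ → ℝ → ℝ :=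
  fun x y z =>
    u1 x y z * pdx g x y z + u2 x y z * pdy g x y z + wvel h u1 u2 x y z * pdz g x y z

/-- The trilinear form `b(U, U♯, U♭)` for pairs `U = (v1, v2, T)`, `U♯ = (s1, s2, sT)`,
`U♭ = (b1, b2, bT)`. -/
def bform (L h : ℝ) (v1 v2 T s1 s2 sT b1 b2 bT : ℝ → ℝ → ℝ → ℝ) : ℝ :=
  intM L h fun x y z =>
    B2comp h v1 v2 s1 x y z * b1 x y z + B2comp h v1 v2 s2 x y z * b2 x y z +
      B2comp h v1 v2 sT x y z * bT x y z

/-- `f` is `L`-periodic in the horizontal variables `x` and `y`. -/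
def PeriodicXY (L : ℝ) (f : ℝ → ℝ → ℝ → ℝ) : Prop :=
  ∀ x y z : ℝ, f (x + L) y z = f x y z ∧ f x (y + L) z = f x y z

/-- `∫_{-h}^{0} div v (x,y,z) dz = 0` for all `(x,y) ∈ M₀`. -/
def BarotropicDivFree (L h : ℝ) (v1 v2 : ℝ → ℝ → ℝ → ℝ) : Prop :=
  ∀ x ∈ Ioo (0:ℝ) L, ∀ y ∈ Ioo (0:ℝ) L,
    (∫ z in (-h)..(0:ℝ), (pdx v1 x y z + pdy v2 x y z)) = 0

/-!
Differentiating `B₂(u, v)` in `z` and using `∂_z w = -div u`, the integrand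
`∂_z B₂(u, v) · ∂_z v` is the middle integrand plus the divergence
`½ ∇·(u |∂_z v|²) + ½ ∂_z (w |∂_z v|²)`. The vertical part integrates to zero because `∂_z v`
vanishes at `z = 0` and `z = -h`, the horizontal part by periodicity. Likewise, the sum of the
middle and the last integrand is the horizontal divergence of
`∂_z u_j (v · ∂_z v) - u_j |∂_z v|²`, which again integrates to zero by periodicity.
-/

open Filter

def uncurry3 (f : ℝ → ℝ → ℝ → ℝ) : ℝ × ℝ × ℝ → ℝ := fun p => f p.1 p.2.1 p.2.2

def SmoothOn (U : Set (ℝ × ℝ × ℝ)) (f : ℝ → ℝ → ℝ → ℝ) : Prop :=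
  ContDiffOn ℝ (⊤ : ℕ∞) (uncurry3 f) U

theorem exists_smoothOn_of_smoothNearM {L h : ℝ} {f₁ f₂ f₃ f₄ : ℝ → ℝ → ℝ → ℝ}
    (h₁ : SmoothNearM L h f₁) (h₂ : SmoothNearM L h f₂) (h₃ : SmoothNearM L h f₃)
    (h₄ : SmoothNearM L h f₄) :
    ∃ U, IsOpen U ∧ closure (Mset L h) ⊆ U ∧
      SmoothOn U f₁ ∧ SmoothOn U f₂ ∧ SmoothOn U f₃ ∧ SmoothOn U f₄ := by
  obtain ⟨U₁, hU₁, hM₁, s₁⟩ := h₁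
  obtain ⟨U₂, hU₂, hM₂, s₂⟩ := h₂
  obtain ⟨U₃, hU₃, hM₃, s₃⟩ := h₃
  obtain ⟨U₄, hU₄, hM₄, s₄⟩ := h₄
  refine ⟨U₁ ∩ U₂ ∩ U₃ ∩ U₄, ((hU₁.inter hU₂).inter hU₃).inter hU₄,
    subset_inter (subset_inter (subset_inter hM₁ hM₂) hM₃) hM₄, s₁.mono ?_, s₂.mono ?_,
    s₃.mono ?_, s₄.mono ?_⟩ <;> intro p hp
  exacts [hp.1.1.1, hp.1.1.2, hp.1.2, hp.2]

theorem hasDerivAt_lineX (x y z : ℝ) :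
    HasDerivAt (fun t : ℝ => (t, y, z)) ((1, 0, 0) : ℝ × ℝ × ℝ) x :=
  (hasDerivAt_id' x).prodMk ((hasDerivAt_const x y).prodMk (hasDerivAt_const x z))

theorem hasDerivAt_lineY (x y z : ℝ) :
    HasDerivAt (fun t : ℝ => (x, t, z)) ((0, 1, 0) : ℝ × ℝ × ℝ) y :=
  (hasDerivAt_const y x).prodMk ((hasDerivAt_id' y).prodMk (hasDerivAt_const y z))

theorem hasDerivAt_lineZ (x y z : ℝ) :
    HasDerivAt (fun t : ℝ => (x, y, t)) ((0, 0, 1) : ℝ × ℝ × ℝ) z :=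
  (hasDerivAt_const z x).prodMk ((hasDerivAt_const z y).prodMk (hasDerivAt_id' z))

namespace SmoothOn

variable {U : Set (ℝ × ℝ × ℝ)} {f : ℝ → ℝ → ℝ → ℝ} {x y z : ℝ}

theorem add {g : ℝ → ℝ → ℝ → ℝ} (hf : SmoothOn U f) (hg : SmoothOn U g) :
    SmoothOn U (fun x y z => f x y z + g x y z) :=
  ContDiffOn.add hf hg

theorem contDiffOn_fderiv (hU : IsOpen U) (hf : SmoothOn U f) :
    ContDiffOn ℝ (⊤ : ℕ∞) (fderiv ℝ (uncurry3 f)) U :=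
  hf.fderiv_of_isOpen hU (m := ((⊤ : ℕ∞) : WithTop ℕ∞)) (by simp)

theorem hasDerivAt_comp (hU : IsOpen U) (hf : SmoothOn U f) {ℓ : ℝ → ℝ × ℝ × ℝ}
    {e : ℝ × ℝ × ℝ} {t : ℝ} (hℓ : HasDerivAt ℓ e t) (ht : ℓ t ∈ U) :
    HasDerivAt (fun s => uncurry3 f (ℓ s)) (fderiv ℝ (uncurry3 f) (ℓ t) e) t :=
  ((hf.contDiffAt (hU.mem_nhds ht)).differentiableAt (by simp)).hasFDerivAt.comp_hasDerivAt t hℓ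

theorem hasDerivAt_slice_x (hU : IsOpen U) (hf : SmoothOn U f) (hp : (x, y, z) ∈ U) :
    HasDerivAt (fun t => f t y z) (_root_.pdx f x y z) x :=
  (hf.hasDerivAt_comp hU (hasDerivAt_lineX x y z) hp).differentiableAt.hasDerivAt

theorem hasDerivAt_slice_y (hU : IsOpen U) (hf : SmoothOn U f) (hp : (x, y, z) ∈ U) :
    HasDerivAt (fun t => f x t z) (_root_.pdy f x y z) y :=
  (hf.hasDerivAt_comp hU (hasDerivAt_lineY x y z) hp).differentiableAt.hasDerivAt

theorem hasDerivAt_slice_z (hU : IsOpen U) (hf : SmoothOn U f) (hp : (x, y, z) ∈ U) :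
    HasDerivAt (fun t => f x y t) (_root_.pdz f x y z) z :=
  (hf.hasDerivAt_comp hU (hasDerivAt_lineZ x y z) hp).differentiableAt.hasDerivAt

theorem eqOn_pdx (hU : IsOpen U) (hf : SmoothOn U f) :
    EqOn (uncurry3 (_root_.pdx f)) (fun q => fderiv ℝ (uncurry3 f) q (1, 0, 0)) U := fun q hq =>
  (hf.hasDerivAt_comp hU (hasDerivAt_lineX q.1 q.2.1 q.2.2) hq).deriv

theorem eqOn_pdy (hU : IsOpen U) (hf : SmoothOn U f) :
    EqOn (uncurry3 (_root_.pdy f)) (fun q => fderiv ℝ (uncurry3 f) q (0, 1, 0)) U := fun q hq =>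
  (hf.hasDerivAt_comp hU (hasDerivAt_lineY q.1 q.2.1 q.2.2) hq).deriv

theorem eqOn_pdz (hU : IsOpen U) (hf : SmoothOn U f) :
    EqOn (uncurry3 (_root_.pdz f)) (fun q => fderiv ℝ (uncurry3 f) q (0, 0, 1)) U := fun q hq =>
  (hf.hasDerivAt_comp hU (hasDerivAt_lineZ q.1 q.2.1 q.2.2) hq).deriv

theorem of_eqOn_fderiv_apply (hU : IsOpen U) (hf : SmoothOn U f) {g : ℝ → ℝ → ℝ → ℝ}
    {e : ℝ × ℝ × ℝ} (hg : EqOn (uncurry3 g) (fun q => fderiv ℝ (uncurry3 f) q e) U) :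
    SmoothOn U g :=
  ((hf.contDiffOn_fderiv hU).clm_apply contDiffOn_const).congr hg

theorem pdx (hU : IsOpen U) (hf : SmoothOn U f) : SmoothOn U (_root_.pdx f) :=
  hf.of_eqOn_fderiv_apply hU (hf.eqOn_pdx hU)

theorem pdy (hU : IsOpen U) (hf : SmoothOn U f) : SmoothOn U (_root_.pdy f) :=
  hf.of_eqOn_fderiv_apply hU (hf.eqOn_pdy hU)

theorem pdz (hU : IsOpen U) (hf : SmoothOn U f) : SmoothOn U (_root_.pdz f) :=
  hf.of_eqOn_fderiv_apply hU (hf.eqOn_pdz hU)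

theorem fderiv_apply_of_eqOn_fderiv_apply (hU : IsOpen U) (hf : SmoothOn U f)
    {g : ℝ → ℝ → ℝ → ℝ} {e : ℝ × ℝ × ℝ}
    (hg : EqOn (uncurry3 g) (fun q => fderiv ℝ (uncurry3 f) q e) U)
    {p : ℝ × ℝ × ℝ} (hp : p ∈ U) (w : ℝ × ℝ × ℝ) :
    fderiv ℝ (uncurry3 g) p w = fderiv ℝ (fderiv ℝ (uncurry3 f)) p w e := by
  have hD : DifferentiableAt ℝ (fderiv ℝ (uncurry3 f)) p :=
    ((hf.contDiffOn_fderiv hU).contDiffAt (hU.mem_nhds hp)).differentiableAt (by simp)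
  rw [(eventuallyEq_of_mem (hU.mem_nhds hp) hg).fderiv_eq,
    fderiv_clm_apply hD (differentiableAt_const e)]
  simp

theorem fderiv_apply_comm_of_eqOn (hU : IsOpen U) (hf : SmoothOn U f)
    {g k : ℝ → ℝ → ℝ → ℝ} {e e' : ℝ × ℝ × ℝ}
    (hg : EqOn (uncurry3 g) (fun q => fderiv ℝ (uncurry3 f) q e) U)
    (hk : EqOn (uncurry3 k) (fun q => fderiv ℝ (uncurry3 f) q e') U)
    {p : ℝ × ℝ × ℝ} (hp : p ∈ U) :
    fderiv ℝ (uncurry3 g) p e' = fderiv ℝ (uncurry3 k) p e := by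
  rw [hf.fderiv_apply_of_eqOn_fderiv_apply hU hg hp, hf.fderiv_apply_of_eqOn_fderiv_apply hU hk hp,
    (hf.contDiffAt (hU.mem_nhds hp)).isSymmSndFDerivAt (by simp [← WithTop.coe_ofNat])]

theorem pdz_pdx_comm (hU : IsOpen U) (hf : SmoothOn U f) (hp : (x, y, z) ∈ U) :
    _root_.pdz (_root_.pdx f) x y z = _root_.pdx (_root_.pdz f) x y z :=
  calc _ = fderiv ℝ (uncurry3 (_root_.pdx f)) (x, y, z) (0, 0, 1) := (hf.pdx hU).eqOn_pdz hU hp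
    _ = fderiv ℝ (uncurry3 (_root_.pdz f)) (x, y, z) (1, 0, 0) :=
      hf.fderiv_apply_comm_of_eqOn hU (hf.eqOn_pdx hU) (hf.eqOn_pdz hU) hp
    _ = _ := ((hf.pdz hU).eqOn_pdx hU hp).symm

theorem pdz_pdy_comm (hU : IsOpen U) (hf : SmoothOn U f) (hp : (x, y, z) ∈ U) :
    _root_.pdz (_root_.pdy f) x y z = _root_.pdy (_root_.pdz f) x y z :=
  calc _ = fderiv ℝ (uncurry3 (_root_.pdy f)) (x, y, z) (0, 0, 1) := (hf.pdy hU).eqOn_pdz hU hp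
    _ = fderiv ℝ (uncurry3 (_root_.pdz f)) (x, y, z) (0, 1, 0) :=
      hf.fderiv_apply_comm_of_eqOn hU (hf.eqOn_pdy hU) (hf.eqOn_pdz hU) hp
    _ = _ := ((hf.pdz hU).eqOn_pdy hU hp).symm

end SmoothOn

section Periodic

variable {L : ℝ} {f g : ℝ → ℝ → ℝ → ℝ}

theorem PeriodicXY.pdz (hf : PeriodicXY L f) : PeriodicXY L (pdz f) := fun x y z => by
  simp only [_root_.pdz, (hf x y _).1, (hf x y _).2, and_self]

theorem PeriodicXY.add (hf : PeriodicXY L f) (hg : PeriodicXY L g) :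
    PeriodicXY L (fun x y z => f x y z + g x y z) := fun x y z => by
  simp only [(hf x y z).1, (hf x y z).2, (hg x y z).1, (hg x y z).2, and_self]

theorem PeriodicXY.sub (hf : PeriodicXY L f) (hg : PeriodicXY L g) :
    PeriodicXY L (fun x y z => f x y z - g x y z) := fun x y z => by
  simp only [(hf x y z).1, (hf x y z).2, (hg x y z).1, (hg x y z).2, and_self]

theorem PeriodicXY.mul (hf : PeriodicXY L f) (hg : PeriodicXY L g) :
    PeriodicXY L (fun x y z => f x y z * g x y z) := fun x y z => by
  simp only [(hf x y z).1, (hf x y z).2, (hg x y z).1, (hg x y z).2, and_self]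

theorem PeriodicXY.pow (hf : PeriodicXY L f) (n : ℕ) :
    PeriodicXY L (fun x y z => f x y z ^ n) := fun x y z => by
  simp only [(hf x y z).1, (hf x y z).2, and_self]

theorem PeriodicXY.div_const (hf : PeriodicXY L f) (c : ℝ) :
    PeriodicXY L (fun x y z => f x y z / c) := fun x y z => by
  simp only [(hf x y z).1, (hf x y z).2, and_self]

end Periodic

section Integration

variable {L h : ℝ} {U : Set (ℝ × ℝ × ℝ)} {F G P Q : ℝ → ℝ → ℝ → ℝ}

theorem closure_Mset (hL : 0 < L) (hh : 0 < h) :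
    closure (Mset L h) = Icc 0 L ×ˢ Icc 0 L ×ˢ Icc (-h) 0 := by
  rw [Mset, closure_prod_eq, closure_prod_eq, closure_Ioo hL.ne, closure_Ioo (by linarith)]

theorem isCompact_closure_Mset : IsCompact (closure (Mset L h)) :=
  (isCompact_Icc.prod (isCompact_Icc.prod isCompact_Icc)).of_isClosed_subset isClosed_closure
    (closure_minimal (prod_mono Ioo_subset_Icc_self
      (prod_mono Ioo_subset_Icc_self Ioo_subset_Icc_self))
      (isClosed_Icc.prod (isClosed_Icc.prod isClosed_Icc)))

theorem integrableOn_Mset (hF : ContinuousOn (uncurry3 F) (closure (Mset L h))) :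
    IntegrableOn (uncurry3 F) (Mset L h) :=
  (hF.integrableOn_compact isCompact_closure_Mset).mono_set subset_closure

theorem intM_eq_setIntegral_s13 (hF : ContinuousOn (uncurry3 F) (closure (Mset L h))) :
    intM L h F = ∫ p in Mset L h, uncurry3 F p := by
  have hI := integrableOn_Mset hF
  rw [Mset, Measure.volume_eq_prod] at hI ⊢
  rw [setIntegral_prod _ hI, intM]
  refine integral_congr_ae ?_
  rw [IntegrableOn, ← Measure.prod_restrict] at hI
  filter_upwards [hI.prod_right_ae] with x hx
  rw [Measure.volume_eq_prod,
    setIntegral_prod _ (by rwa [IntegrableOn, ← Measure.volume_eq_prod])]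
  rfl

theorem intM_congr
    (hFG : ∀ x ∈ Ioo (0:ℝ) L, ∀ y ∈ Ioo (0:ℝ) L, ∀ z ∈ Ioo (-h) (0:ℝ), F x y z = G x y z) :
    intM L h F = intM L h G :=
  setIntegral_congr_fun measurableSet_Ioo fun x hx => setIntegral_congr_fun measurableSet_Ioo
    fun y hy => setIntegral_congr_fun measurableSet_Ioo fun z hz => hFG x hx y hy z hz

theorem intM_add (hF : ContinuousOn (uncurry3 F) (closure (Mset L h)))
    (hG : ContinuousOn (uncurry3 G) (closure (Mset L h))) :
    intM L h (fun x y z => F x y z + G x y z) = intM L h F + intM L h G := by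
  rw [intM_eq_setIntegral_s13 hF, intM_eq_setIntegral_s13 hG,
    intM_eq_setIntegral_s13 (F := fun x y z => F x y z + G x y z) (hF.add hG)]
  exact integral_add (integrableOn_Mset hF) (integrableOn_Mset hG)

theorem intM_neg : intM L h (fun x y z => -F x y z) = -intM L h F := by
  simp only [intM, integral_neg]

theorem setIntegral_Ioo_eq_sub_of_hasDerivAt {g g' : ℝ → ℝ} {a b : ℝ} (hab : a ≤ b)
    (hg : ∀ t ∈ Icc a b, HasDerivAt g (g' t) t) (hg' : ContinuousOn g' (Icc a b)) :
    ∫ t in Ioo a b, g' t = g b - g a := by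
  rw [← integral_Ioc_eq_integral_Ioo, ← intervalIntegral.integral_of_le hab]
  exact intervalIntegral.integral_eq_sub_of_hasDerivAt (by rwa [uIcc_of_le hab])
    (hg'.intervalIntegrable_of_Icc hab)

theorem setIntegral_Ioo_add_deriv_eq {G W W' : ℝ → ℝ} {a b : ℝ} (hab : a ≤ b)
    (hG : IntegrableOn G (Ioo a b)) (hW : ∀ t ∈ Icc a b, HasDerivAt W (W' t) t)
    (hW' : ContinuousOn W' (Icc a b)) (hWab : W a = W b) :
    ∫ t in Ioo a b, (G t + W' t) = ∫ t in Ioo a b, G t := by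
  rw [integral_add hG ((hW'.integrableOn_Icc).mono_set Ioo_subset_Icc_self),
    setIntegral_Ioo_eq_sub_of_hasDerivAt hab hW hW', hWab, sub_self, add_zero]

theorem intM_pdx_eq_zero (hL : 0 < L) (hh : 0 < h) (hU : IsOpen U)
    (hMU : closure (Mset L h) ⊆ U) (hP : SmoothOn U P) (hper : PeriodicXY L P) :
    intM L h (pdx P) = 0 := by
  have hcont := (hP.pdx hU).continuousOn.mono hMU
  have hI := integrableOn_Mset hcont
  rw [Mset, Measure.volume_eq_prod, IntegrableOn, ← Measure.prod_restrict] at hI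
  rw [intM_eq_setIntegral_s13 hcont, Mset, Measure.volume_eq_prod, ← Measure.prod_restrict,
    integral_prod_symm _ hI]
  refine integral_eq_zero_of_ae ?_
  filter_upwards [ae_restrict_mem (measurableSet_Ioo.prod measurableSet_Ioo)]
    with ⟨y, z⟩ ⟨hy, hz⟩
  have hseg : ∀ t ∈ Icc 0 L, (t, y, z) ∈ U := fun t ht =>
    hMU (by rw [closure_Mset hL hh]; exact ⟨ht, Ioo_subset_Icc_self hy, Ioo_subset_Icc_self hz⟩)
  change ∫ x in Ioo 0 L, pdx P x y z = 0
  rw [setIntegral_Ioo_eq_sub_of_hasDerivAt hL.le (fun t ht => hP.hasDerivAt_slice_x hU (hseg t ht))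
    ((hP.pdx hU).continuousOn.comp (by fun_prop) hseg), ← zero_add L, (hper 0 y z).1, sub_self]

theorem intM_pdy_eq_zero (hL : 0 < L) (hh : 0 < h) (hU : IsOpen U)
    (hMU : closure (Mset L h) ⊆ U) (hP : SmoothOn U P) (hper : PeriodicXY L P) :
    intM L h (pdy P) = 0 := by
  refine integral_eq_zero_of_ae ?_
  filter_upwards [ae_restrict_mem measurableSet_Ioo] with x hx
  have hseg : ∀ y ∈ Icc 0 L, ∀ z ∈ Icc (-h) 0, (x, y, z) ∈ U := fun y hy z hz =>
    hMU (by rw [closure_Mset hL hh]; exact ⟨Ioo_subset_Icc_self hx, hy, hz⟩)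
  have hI : Integrable (Function.uncurry fun y z => pdy P x y z)
      ((volume.restrict (Ioo 0 L)).prod (volume.restrict (Ioo (-h) 0))) := by
    rw [Measure.prod_restrict, ← Measure.volume_eq_prod]
    exact (((hP.pdy hU).continuousOn.comp (by fun_prop) fun q hq => hseg q.1 hq.1 q.2 hq.2)
      |>.integrableOn_compact (μ := volume) (isCompact_Icc.prod isCompact_Icc)).mono_set
      (prod_mono Ioo_subset_Icc_self Ioo_subset_Icc_self)
  rw [Pi.zero_apply, integral_integral_swap hI]
  refine integral_eq_zero_of_ae ?_
  filter_upwards [ae_restrict_mem measurableSet_Ioo] with z hz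
  have hseg' : ∀ t ∈ Icc 0 L, (x, t, z) ∈ U := fun t ht =>
    hseg t ht z (Ioo_subset_Icc_self hz)
  rw [Pi.zero_apply, setIntegral_Ioo_eq_sub_of_hasDerivAt hL.le
    (fun t ht => hP.hasDerivAt_slice_y hU (hseg' t ht))
    ((hP.pdy hU).continuousOn.comp (by fun_prop) hseg'), ← zero_add L, (hper x 0 z).2, sub_self]

theorem intM_add_pdx_add_pdy (hL : 0 < L) (hh : 0 < h) (hU : IsOpen U)
    (hMU : closure (Mset L h) ⊆ U) (hG : ContinuousOn (uncurry3 G) (closure (Mset L h)))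
    (hP : SmoothOn U P) (hQ : SmoothOn U Q) (pP : PeriodicXY L P) (pQ : PeriodicXY L Q) :
    intM L h (fun x y z => G x y z + (pdx P x y z + pdy Q x y z)) = intM L h G := by
  have hPx := (hP.pdx hU).continuousOn.mono hMU
  have hQy := (hQ.pdy hU).continuousOn.mono hMU
  rw [intM_add hG (F := G) (G := fun x y z => pdx P x y z + pdy Q x y z) (hPx.add hQy),
    intM_add hPx hQy, intM_pdx_eq_zero hL hh hU hMU hP pP, intM_pdy_eq_zero hL hh hU hMU hQ pQ,
    add_zero, add_zero]

end Integration

def vzNormSq (v1 v2 : ℝ → ℝ → ℝ → ℝ) : ℝ → ℝ → ℝ → ℝ :=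
  fun x y z => pdz v1 x y z ^ 2 + pdz v2 x y z ^ 2

def energyFlux (u v1 v2 : ℝ → ℝ → ℝ → ℝ) : ℝ → ℝ → ℝ → ℝ :=
  fun x y z => u x y z * vzNormSq v1 v2 x y z / 2

def shearFlux (u v1 v2 : ℝ → ℝ → ℝ → ℝ) : ℝ → ℝ → ℝ → ℝ :=
  fun x y z => pdz u x y z * (v1 x y z * pdz v1 x y z + v2 x y z * pdz v2 x y z) -
    u x y z * vzNormSq v1 v2 x y z

def shearIntegrand (u1 u2 v1 v2 : ℝ → ℝ → ℝ → ℝ) : ℝ → ℝ → ℝ → ℝ :=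
  fun x y z =>
  (pdz u1 x y z * pdx v1 x y z * pdz v1 x y z +
   pdz u1 x y z * pdx v2 x y z * pdz v2 x y z +
   pdz u2 x y z * pdy v1 x y z * pdz v1 x y z +
   pdz u2 x y z * pdy v2 x y z * pdz v2 x y z)
  - (pdx u1 x y z + pdy u2 x y z) * vzNormSq v1 v2 x y z

def shearIntegrandByParts (u1 u2 v1 v2 : ℝ → ℝ → ℝ → ℝ) : ℝ → ℝ → ℝ → ℝ :=
  fun x y z =>
  (pdz (pdx u1) x y z * v1 x y z * pdz v1 x y z +
   pdz (pdx u1) x y z * v2 x y z * pdz v2 x y z +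
   pdz (pdy u2) x y z * v1 x y z * pdz v1 x y z +
   pdz (pdy u2) x y z * v2 x y z * pdz v2 x y z)
  + (pdz u1 x y z * v1 x y z * pdx (pdz v1) x y z +
     pdz u1 x y z * v2 x y z * pdx (pdz v2) x y z +
     pdz u2 x y z * v1 x y z * pdy (pdz v1) x y z +
     pdz u2 x y z * v2 x y z * pdy (pdz v2) x y z)
  - 2 * (u1 x y z * pdx (pdz v1) x y z * pdz v1 x y z +
         u1 x y z * pdx (pdz v2) x y z * pdz v2 x y z +
         u2 x y z * pdy (pdz v1) x y z * pdz v1 x y z +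
         u2 x y z * pdy (pdz v2) x y z * pdz v2 x y z)

section Fluxes

variable {L : ℝ} {U : Set (ℝ × ℝ × ℝ)} {u u1 u2 v1 v2 : ℝ → ℝ → ℝ → ℝ}

theorem SmoothOn.vzNormSq (hU : IsOpen U) (hv1 : SmoothOn U v1) (hv2 : SmoothOn U v2) :
    SmoothOn U (vzNormSq v1 v2) := by
  have := hv1.pdz hU; have := hv2.pdz hU
  unfold SmoothOn uncurry3 _root_.vzNormSq at *
  fun_prop

theorem SmoothOn.energyFlux (hU : IsOpen U) (hu : SmoothOn U u) (hv1 : SmoothOn U v1)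
    (hv2 : SmoothOn U v2) : SmoothOn U (energyFlux u v1 v2) := by
  have := hv1.vzNormSq hU hv2
  unfold SmoothOn uncurry3 _root_.energyFlux at *
  fun_prop

theorem SmoothOn.shearFlux (hU : IsOpen U) (hu : SmoothOn U u) (hv1 : SmoothOn U v1)
    (hv2 : SmoothOn U v2) : SmoothOn U (shearFlux u v1 v2) := by
  have := hu.pdz hU; have := hv1.pdz hU; have := hv2.pdz hU; have := hv1.vzNormSq hU hv2
  unfold SmoothOn uncurry3 _root_.shearFlux at *
  fun_prop

theorem SmoothOn.shearIntegrand (hU : IsOpen U) (hu1 : SmoothOn U u1) (hu2 : SmoothOn U u2)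
    (hv1 : SmoothOn U v1) (hv2 : SmoothOn U v2) : SmoothOn U (shearIntegrand u1 u2 v1 v2) := by
  have := hu1.pdz hU; have := hu2.pdz hU; have := hu1.pdx hU; have := hu2.pdy hU
  have := hv1.pdx hU; have := hv2.pdx hU; have := hv1.pdy hU; have := hv2.pdy hU
  have := hv1.pdz hU; have := hv2.pdz hU; have := hv1.vzNormSq hU hv2
  unfold SmoothOn uncurry3 _root_.shearIntegrand at *
  fun_prop

theorem SmoothOn.shearIntegrandByParts (hU : IsOpen U) (hu1 : SmoothOn U u1)
    (hu2 : SmoothOn U u2) (hv1 : SmoothOn U v1) (hv2 : SmoothOn U v2) :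
    SmoothOn U (shearIntegrandByParts u1 u2 v1 v2) := by
  have := hu1.pdz hU; have := hu2.pdz hU; have := (hu1.pdx hU).pdz hU
  have := (hu2.pdy hU).pdz hU; have := hv1.pdz hU; have := hv2.pdz hU
  have := (hv1.pdz hU).pdx hU; have := (hv2.pdz hU).pdx hU
  have := (hv1.pdz hU).pdy hU; have := (hv2.pdz hU).pdy hU
  unfold SmoothOn uncurry3 _root_.shearIntegrandByParts at *
  fun_prop

theorem PeriodicXY.vzNormSq (hv1 : PeriodicXY L v1) (hv2 : PeriodicXY L v2) :
    PeriodicXY L (vzNormSq v1 v2) :=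
  (hv1.pdz.pow 2).add (hv2.pdz.pow 2)

theorem PeriodicXY.energyFlux (hu : PeriodicXY L u) (hv1 : PeriodicXY L v1)
    (hv2 : PeriodicXY L v2) : PeriodicXY L (energyFlux u v1 v2) :=
  (hu.mul (hv1.vzNormSq hv2)).div_const 2

theorem PeriodicXY.shearFlux (hu : PeriodicXY L u) (hv1 : PeriodicXY L v1)
    (hv2 : PeriodicXY L v2) : PeriodicXY L (shearFlux u v1 v2) :=
  (hu.pdz.mul ((hv1.mul hv1.pdz).add (hv2.mul hv2.pdz))).sub (hu.mul (hv1.vzNormSq hv2))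

end Fluxes

section Identities

variable {h : ℝ} {U : Set (ℝ × ℝ × ℝ)} {u1 u2 v v1 v2 : ℝ → ℝ → ℝ → ℝ} {x y z : ℝ}

theorem hasDerivAt_wvel (hU : IsOpen U) (hu1 : SmoothOn U u1) (hu2 : SmoothOn U u2)
    (hseg : ∀ t ∈ uIcc (-h) z, (x, y, t) ∈ U) :
    HasDerivAt (wvel h u1 u2 x y) (-(pdx u1 x y z + pdy u2 x y z)) z := by
  have hS : IsOpen {t : ℝ | (x, y, t) ∈ U} := hU.preimage (by fun_prop)
  have hdiv : ContinuousOn (fun t => pdx u1 x y t + pdy u2 x y t) {t | (x, y, t) ∈ U} :=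
    ((hu1.pdx hU).continuousOn.add (hu2.pdy hU).continuousOn).comp
      (Continuous.continuousOn (by fun_prop : Continuous fun t : ℝ => (x, y, t))) fun _ ht => ht
  have hz : z ∈ {t : ℝ | (x, y, t) ∈ U} := hseg z right_mem_uIcc
  exact (intervalIntegral.integral_hasDerivAt_right (hdiv.mono hseg).intervalIntegrable
    (hdiv.stronglyMeasurableAtFilter hS z hz) (hdiv.continuousAt (hS.mem_nhds hz))).neg

theorem pdz_B2comp (hU : IsOpen U) (hu1 : SmoothOn U u1) (hu2 : SmoothOn U u2)
    (hv : SmoothOn U v) (hp : (x, y, z) ∈ U) {w' : ℝ}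
    (hw : HasDerivAt (wvel h u1 u2 x y) w' z) :
    pdz (B2comp h u1 u2 v) x y z =
      pdz u1 x y z * pdx v x y z + u1 x y z * pdx (pdz v) x y z +
        (pdz u2 x y z * pdy v x y z + u2 x y z * pdy (pdz v) x y z) +
        (w' * pdz v x y z + wvel h u1 u2 x y z * pdz (pdz v) x y z) := by
  rw [← hv.pdz_pdx_comm hU hp, ← hv.pdz_pdy_comm hU hp]
  exact ((((hu1.hasDerivAt_slice_z hU hp).mul ((hv.pdx hU).hasDerivAt_slice_z hU hp)).add
    ((hu2.hasDerivAt_slice_z hU hp).mul ((hv.pdy hU).hasDerivAt_slice_z hU hp))).add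
    (hw.mul ((hv.pdz hU).hasDerivAt_slice_z hU hp))).deriv

theorem pdz_B2comp_inner_pdz_eq (hU : IsOpen U) (hu1 : SmoothOn U u1) (hu2 : SmoothOn U u2)
    (hv1 : SmoothOn U v1) (hv2 : SmoothOn U v2) (hp : (x, y, z) ∈ U)
    (hw : HasDerivAt (wvel h u1 u2 x y) (-(pdx u1 x y z + pdy u2 x y z)) z) :
    pdz (B2comp h u1 u2 v1) x y z * pdz v1 x y z + pdz (B2comp h u1 u2 v2) x y z * pdz v2 x y z
      = shearIntegrand u1 u2 v1 v2 x y z +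
          (pdx (energyFlux u1 v1 v2) x y z + pdy (energyFlux u2 v1 v2) x y z) +
        (-(pdx u1 x y z + pdy u2 x y z) * vzNormSq v1 v2 x y z +
          wvel h u1 u2 x y z * pdz (vzNormSq v1 v2) x y z) / 2 := by
  have hv1z := hv1.pdz hU
  have hv2z := hv2.pdz hU
  have hNx := ((hv1z.hasDerivAt_slice_x hU hp).pow 2).add ((hv2z.hasDerivAt_slice_x hU hp).pow 2)
  have hNy := ((hv1z.hasDerivAt_slice_y hU hp).pow 2).add ((hv2z.hasDerivAt_slice_y hU hp).pow 2)
  have hNz := ((hv1z.hasDerivAt_slice_z hU hp).pow 2).add ((hv2z.hasDerivAt_slice_z hU hp).pow 2)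
  rw [pdz_B2comp hU hu1 hu2 hv1 hp hw, pdz_B2comp hU hu1 hu2 hv2 hp hw,
    show pdx (energyFlux u1 v1 v2) x y z = _ from
      (((hu1.hasDerivAt_slice_x hU hp).mul hNx).div_const 2).deriv,
    show pdy (energyFlux u2 v1 v2) x y z = _ from
      (((hu2.hasDerivAt_slice_y hU hp).mul hNy).div_const 2).deriv,
    show pdz (vzNormSq v1 v2) x y z = _ from hNz.deriv]
  simp only [shearIntegrand, vzNormSq, Pi.add_apply, Pi.pow_apply]
  ring

theorem shearIntegrand_eq_neg_byParts_add (hU : IsOpen U) (hu1 : SmoothOn U u1)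
    (hu2 : SmoothOn U u2) (hv1 : SmoothOn U v1) (hv2 : SmoothOn U v2) (hp : (x, y, z) ∈ U) :
    shearIntegrand u1 u2 v1 v2 x y z = -shearIntegrandByParts u1 u2 v1 v2 x y z +
      (pdx (shearFlux u1 v1 v2) x y z + pdy (shearFlux u2 v1 v2) x y z) := by
  have hv1z := hv1.pdz hU
  have hv2z := hv2.pdz hU
  have hNx := ((hv1z.hasDerivAt_slice_x hU hp).pow 2).add ((hv2z.hasDerivAt_slice_x hU hp).pow 2)
  have hNy := ((hv1z.hasDerivAt_slice_y hU hp).pow 2).add ((hv2z.hasDerivAt_slice_y hU hp).pow 2)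
  have hVx := ((hv1.hasDerivAt_slice_x hU hp).mul (hv1z.hasDerivAt_slice_x hU hp)).add
    ((hv2.hasDerivAt_slice_x hU hp).mul (hv2z.hasDerivAt_slice_x hU hp))
  have hVy := ((hv1.hasDerivAt_slice_y hU hp).mul (hv1z.hasDerivAt_slice_y hU hp)).add
    ((hv2.hasDerivAt_slice_y hU hp).mul (hv2z.hasDerivAt_slice_y hU hp))
  rw [show pdx (shearFlux u1 v1 v2) x y z = _ from
      ((((hu1.pdz hU).hasDerivAt_slice_x hU hp).mul hVx).sub
        ((hu1.hasDerivAt_slice_x hU hp).mul hNx)).deriv,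
    show pdy (shearFlux u2 v1 v2) x y z = _ from
      ((((hu2.pdz hU).hasDerivAt_slice_y hU hp).mul hVy).sub
        ((hu2.hasDerivAt_slice_y hU hp).mul hNy)).deriv]
  simp only [shearIntegrand, shearIntegrandByParts, vzNormSq, Pi.add_apply, Pi.mul_apply,
    Pi.pow_apply, hu1.pdz_pdx_comm hU hp, hu2.pdz_pdy_comm hU hp]
  ring

end Identities

section Integrals

variable {L h : ℝ} {U : Set (ℝ × ℝ × ℝ)} {u1 u2 v1 v2 : ℝ → ℝ → ℝ → ℝ}

theorem setIntegral_pdz_B2comp_inner_pdz (hL : 0 < L) (hh : 0 < h) (hU : IsOpen U)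
    (hMU : closure (Mset L h) ⊆ U) (hu1 : SmoothOn U u1) (hu2 : SmoothOn U u2)
    (hv1 : SmoothOn U v1) (hv2 : SmoothOn U v2) {x y : ℝ}
    (hx : x ∈ Icc 0 L) (hy : y ∈ Icc 0 L)
    (htop : vzNormSq v1 v2 x y 0 = 0) (hbot : vzNormSq v1 v2 x y (-h) = 0) :
    ∫ z in Ioo (-h) 0,
        (pdz (B2comp h u1 u2 v1) x y z * pdz v1 x y z +
          pdz (B2comp h u1 u2 v2) x y z * pdz v2 x y z) =
      ∫ z in Ioo (-h) 0, (shearIntegrand u1 u2 v1 v2 x y z +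
        (pdx (energyFlux u1 v1 v2) x y z + pdy (energyFlux u2 v1 v2) x y z)) := by
  have hseg : ∀ t ∈ Icc (-h) 0, (x, y, t) ∈ U := fun t ht =>
    hMU (by rw [closure_Mset hL hh]; exact ⟨hx, hy, ht⟩)
  have hslice : ∀ {g : ℝ → ℝ → ℝ → ℝ}, SmoothOn U g →
      ContinuousOn (fun t => g x y t) (Icc (-h) 0) := fun hg =>
    hg.continuousOn.comp (Continuous.continuousOn (by fun_prop)) hseg
  have hw : ∀ t ∈ Icc (-h) 0,
      HasDerivAt (wvel h u1 u2 x y) (-(pdx u1 x y t + pdy u2 x y t)) t := fun t ht =>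
    hasDerivAt_wvel hU hu1 hu2 fun s hs =>
      hseg s (uIcc_subset_Icc (left_mem_Icc.2 (by linarith)) ht hs)
  have hN := hv1.vzNormSq hU hv2
  rw [setIntegral_congr_fun measurableSet_Ioo fun z hz => pdz_B2comp_inner_pdz_eq hU hu1 hu2 hv1 hv2
    (hseg z (Ioo_subset_Icc_self hz)) (hw z (Ioo_subset_Icc_self hz))]
  refine setIntegral_Ioo_add_deriv_eq (W := fun t => wvel h u1 u2 x y t * vzNormSq v1 v2 x y t / 2)
    (by linarith) ?_
    (fun t ht => ((hw t ht).mul (hN.hasDerivAt_slice_z hU (hseg t ht))).div_const 2)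
    ?_ (by simp only [htop, hbot, mul_zero])
  · exact (hslice (((hu1.shearIntegrand hU hu2 hv1 hv2).add
      (((hu1.energyFlux hU hv1 hv2).pdx hU).add ((hu2.energyFlux hU hv1 hv2).pdy hU))))
      |>.integrableOn_Icc).mono_set Ioo_subset_Icc_self
  · have hwc : ContinuousOn (wvel h u1 u2 x y) (Icc (-h) 0) := fun t ht =>
      (hw t ht).continuousAt.continuousWithinAt
    exact ((((hslice (hu1.pdx hU)).add (hslice (hu2.pdy hU))).neg.mul (hslice hN)).add
      (hwc.mul (hslice (hN.pdz hU)))).div_const 2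

theorem intM_pdz_B2comp_inner_pdz (hL : 0 < L) (hh : 0 < h) (hU : IsOpen U)
    (hMU : closure (Mset L h) ⊆ U) (hu1 : SmoothOn U u1) (hu2 : SmoothOn U u2)
    (hv1 : SmoothOn U v1) (hv2 : SmoothOn U v2) (pu1 : PeriodicXY L u1)
    (pu2 : PeriodicXY L u2) (pv1 : PeriodicXY L v1) (pv2 : PeriodicXY L v2)
    (hbc : ∀ x ∈ Ioo (0:ℝ) L, ∀ y ∈ Ioo (0:ℝ) L,
      vzNormSq v1 v2 x y 0 = 0 ∧ vzNormSq v1 v2 x y (-h) = 0) :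
    intM L h (fun x y z =>
        pdz (B2comp h u1 u2 v1) x y z * pdz v1 x y z +
          pdz (B2comp h u1 u2 v2) x y z * pdz v2 x y z) =
      intM L h (shearIntegrand u1 u2 v1 v2) := by
  calc _ = intM L h (fun x y z => shearIntegrand u1 u2 v1 v2 x y z +
          (pdx (energyFlux u1 v1 v2) x y z + pdy (energyFlux u2 v1 v2) x y z)) :=
        setIntegral_congr_fun measurableSet_Ioo fun x hx =>
          setIntegral_congr_fun measurableSet_Ioo fun y hy =>
            setIntegral_pdz_B2comp_inner_pdz hL hh hU hMU hu1 hu2 hv1 hv2 (Ioo_subset_Icc_self hx)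
              (Ioo_subset_Icc_self hy) (hbc x hx y hy).1 (hbc x hx y hy).2
    _ = intM L h (shearIntegrand u1 u2 v1 v2) :=
        intM_add_pdx_add_pdy hL hh hU hMU
          ((hu1.shearIntegrand hU hu2 hv1 hv2).continuousOn.mono hMU)
          (hu1.energyFlux hU hv1 hv2) (hu2.energyFlux hU hv1 hv2)
          (pu1.energyFlux pv1 pv2) (pu2.energyFlux pv1 pv2)

theorem intM_shearIntegrand_eq_neg (hL : 0 < L) (hh : 0 < h) (hU : IsOpen U)
    (hMU : closure (Mset L h) ⊆ U) (hu1 : SmoothOn U u1) (hu2 : SmoothOn U u2)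
    (hv1 : SmoothOn U v1) (hv2 : SmoothOn U v2) (pu1 : PeriodicXY L u1)
    (pu2 : PeriodicXY L u2) (pv1 : PeriodicXY L v1) (pv2 : PeriodicXY L v2) :
    intM L h (shearIntegrand u1 u2 v1 v2) = -intM L h (shearIntegrandByParts u1 u2 v1 v2) := by
  calc _ = intM L h (fun x y z => -shearIntegrandByParts u1 u2 v1 v2 x y z +
          (pdx (shearFlux u1 v1 v2) x y z + pdy (shearFlux u2 v1 v2) x y z)) :=
        intM_congr fun x hx y hy z hz => shearIntegrand_eq_neg_byParts_add hU hu1 hu2 hv1 hv2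
          (hMU (subset_closure ⟨hx, hy, hz⟩))
    _ = -intM L h (shearIntegrandByParts u1 u2 v1 v2) := by
        rw [intM_add_pdx_add_pdy (G := fun x y z => -shearIntegrandByParts u1 u2 v1 v2 x y z)
          hL hh hU hMU ((hu1.shearIntegrandByParts hU hu2 hv1 hv2).continuousOn.mono hMU).neg
          (hu1.shearFlux hU hv1 hv2) (hu2.shearFlux hU hv1 hv2)
          (pu1.shearFlux pv1 pv2) (pu2.shearFlux pv1 pv2), intM_neg]

end Integrals

theorem stmt13_general (L h : ℝ) (hL : 0 < L) (hh : 0 < h)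
    (u1 u2 v1 v2 : ℝ → ℝ → ℝ → ℝ)
    (hu1 : SmoothNearM L h u1) (hu2 : SmoothNearM L h u2)
    (hv1 : SmoothNearM L h v1) (hv2 : SmoothNearM L h v2)
    (pu1 : PeriodicXY L u1) (pu2 : PeriodicXY L u2)
    (pv1 : PeriodicXY L v1) (pv2 : PeriodicXY L v2)
    (hbc : ∀ x ∈ Icc (0:ℝ) L, ∀ y ∈ Icc (0:ℝ) L,
      pdz u1 x y 0 = 0 ∧ pdz u2 x y 0 = 0 ∧ pdz v1 x y 0 = 0 ∧ pdz v2 x y 0 = 0 ∧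
      pdz u1 x y (-h) = 0 ∧ pdz u2 x y (-h) = 0 ∧ pdz v1 x y (-h) = 0 ∧ pdz v2 x y (-h) = 0) :
    intM L h (fun x y z =>
        pdz (B2comp h u1 u2 v1) x y z * pdz v1 x y z +
          pdz (B2comp h u1 u2 v2) x y z * pdz v2 x y z)
      = intM L h (fun x y z =>
        (pdz u1 x y z * pdx v1 x y z * pdz v1 x y z +
         pdz u1 x y z * pdx v2 x y z * pdz v2 x y z +
         pdz u2 x y z * pdy v1 x y z * pdz v1 x y z +
         pdz u2 x y z * pdy v2 x y z * pdz v2 x y z)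
        - (pdx u1 x y z + pdy u2 x y z) * ((pdz v1 x y z) ^ 2 + (pdz v2 x y z) ^ 2))
    ∧ intM L h (fun x y z =>
        (pdz u1 x y z * pdx v1 x y z * pdz v1 x y z +
         pdz u1 x y z * pdx v2 x y z * pdz v2 x y z +
         pdz u2 x y z * pdy v1 x y z * pdz v1 x y z +
         pdz u2 x y z * pdy v2 x y z * pdz v2 x y z)
        - (pdx u1 x y z + pdy u2 x y z) * ((pdz v1 x y z) ^ 2 + (pdz v2 x y z) ^ 2))
      = - intM L h (fun x y z =>
        (pdz (pdx u1) x y z * v1 x y z * pdz v1 x y z +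
         pdz (pdx u1) x y z * v2 x y z * pdz v2 x y z +
         pdz (pdy u2) x y z * v1 x y z * pdz v1 x y z +
         pdz (pdy u2) x y z * v2 x y z * pdz v2 x y z)
        + (pdz u1 x y z * v1 x y z * pdx (pdz v1) x y z +
           pdz u1 x y z * v2 x y z * pdx (pdz v2) x y z +
           pdz u2 x y z * v1 x y z * pdy (pdz v1) x y z +
           pdz u2 x y z * v2 x y z * pdy (pdz v2) x y z)
        - 2 * (u1 x y z * pdx (pdz v1) x y z * pdz v1 x y z +
               u1 x y z * pdx (pdz v2) x y z * pdz v2 x y z +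
               u2 x y z * pdy (pdz v1) x y z * pdz v1 x y z +
               u2 x y z * pdy (pdz v2) x y z * pdz v2 x y z)) := by
  obtain ⟨U, hU, hMU, su1, su2, sv1, sv2⟩ := exists_smoothOn_of_smoothNearM hu1 hu2 hv1 hv2
  refine ⟨intM_pdz_B2comp_inner_pdz hL hh hU hMU su1 su2 sv1 sv2 pu1 pu2 pv1 pv2
    fun x hx y hy => ?_,
    intM_shearIntegrand_eq_neg hL hh hU hMU su1 su2 sv1 sv2 pu1 pu2 pv1 pv2⟩
  obtain ⟨-, -, htop1, htop2, -, -, hbot1, hbot2⟩ :=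
    hbc x (Ioo_subset_Icc_self hx) y (Ioo_subset_Icc_self hy)
  simp [vzNormSq, htop1, htop2, hbot1, hbot2]

/-- identity \eqref{eq:mdp.vz.split}:
for smooth, `L`-periodic `u, v : M → ℝ²` with `∂_z u = ∂_z v = 0` on the top and bottom
boundaries and vanishing vertically averaged divergence of `u`,
`∫_M ∂_z(B₂(u,v)) · ∂_z v dM
  = ∫_M (Σ_{j,k} ∂_z u_j ∂_j v_k ∂_z v_k − (div u) |∂_z v|²) dM
  = − ∫_M Σ_{j,k} (∂_z ∂_j u_j v_k ∂_z v_k + ∂_z u_j v_k ∂_j ∂_z v_k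
      − 2 u_j ∂_j ∂_z v_k ∂_z v_k) dM`. -/
theorem stmt13 (L h : ℝ) (hL : 0 < L) (hh : 0 < h)
    (u1 u2 v1 v2 : ℝ → ℝ → ℝ → ℝ)
    (hu1 : SmoothNearM L h u1) (hu2 : SmoothNearM L h u2)
    (hv1 : SmoothNearM L h v1) (hv2 : SmoothNearM L h v2)
    (pu1 : PeriodicXY L u1) (pu2 : PeriodicXY L u2)
    (pv1 : PeriodicXY L v1) (pv2 : PeriodicXY L v2)
    (hbc : ∀ x ∈ Icc (0:ℝ) L, ∀ y ∈ Icc (0:ℝ) L,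
      pdz u1 x y 0 = 0 ∧ pdz u2 x y 0 = 0 ∧ pdz v1 x y 0 = 0 ∧ pdz v2 x y 0 = 0 ∧
      pdz u1 x y (-h) = 0 ∧ pdz u2 x y (-h) = 0 ∧ pdz v1 x y (-h) = 0 ∧ pdz v2 x y (-h) = 0)
    (hdiv : BarotropicDivFree L h u1 u2) :
    intM L h (fun x y z =>
        pdz (B2comp h u1 u2 v1) x y z * pdz v1 x y z +
          pdz (B2comp h u1 u2 v2) x y z * pdz v2 x y z)
      = intM L h (fun x y z =>
        (pdz u1 x y z * pdx v1 x y z * pdz v1 x y z +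
         pdz u1 x y z * pdx v2 x y z * pdz v2 x y z +
         pdz u2 x y z * pdy v1 x y z * pdz v1 x y z +
         pdz u2 x y z * pdy v2 x y z * pdz v2 x y z)
        - (pdx u1 x y z + pdy u2 x y z) * ((pdz v1 x y z) ^ 2 + (pdz v2 x y z) ^ 2))
    ∧ intM L h (fun x y z =>
        (pdz u1 x y z * pdx v1 x y z * pdz v1 x y z +
         pdz u1 x y z * pdx v2 x y z * pdz v2 x y z +
         pdz u2 x y z * pdy v1 x y z * pdz v1 x y z +
         pdz u2 x y z * pdy v2 x y z * pdz v2 x y z)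
        - (pdx u1 x y z + pdy u2 x y z) * ((pdz v1 x y z) ^ 2 + (pdz v2 x y z) ^ 2))
      = - intM L h (fun x y z =>
        (pdz (pdx u1) x y z * v1 x y z * pdz v1 x y z +
         pdz (pdx u1) x y z * v2 x y z * pdz v2 x y z +
         pdz (pdy u2) x y z * v1 x y z * pdz v1 x y z +
         pdz (pdy u2) x y z * v2 x y z * pdz v2 x y z)
        + (pdz u1 x y z * v1 x y z * pdx (pdz v1) x y z +
           pdz u1 x y z * v2 x y z * pdx (pdz v2) x y z +
           pdz u2 x y z * v1 x y z * pdy (pdz v1) x y z +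
           pdz u2 x y z * v2 x y z * pdy (pdz v2) x y z)
        - 2 * (u1 x y z * pdx (pdz v1) x y z * pdz v1 x y z +
               u1 x y z * pdx (pdz v2) x y z * pdz v2 x y z +
               u2 x y z * pdy (pdz v1) x y z * pdz v1 x y z +
               u2 x y z * pdy (pdz v2) x y z * pdz v2 x y z)) :=
  stmt13_general L h hL hh u1 u2 v1 v2 hu1 hu2 hv1 hv2 pu1 pu2 pv1 pv2 hbc
end
end
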